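/- Let 0 < μ < 1, let (w_k) with w_k = (k+1)^{1-μ} - k^{1-μ}, and let (ζ_n) be a sequence of complex numbers satisfying |ζ_{n+1}| ≤ |ζ_n - ∑_{k=1}^{n} w_k (ζ_{n-k+1} - ζ_{n-k})| for all n ≥ 0. Then |ζ_n| ≤ |ζ_0| for all n ≥ 0. -/

import Mathlib

/-!
Abel summation rewrites the right-hand side of the recursion as
`w n • ζ 0 + ∑_{k<n} (w k - w (k+1)) • ζ (n-k)`. For the L1 weights, which are nonnegative,
nonincreasing (by concavity of `x ↦ x ^ (1-μ)`) and start at `w 0 = 1`, these coefficients are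
nonnegative and telescope to `1`, so `ζ (n+1)` is bounded by a convex combination of the norms of
earlier terms, and strong induction gives `‖ζ n‖ ≤ ‖ζ 0‖`.
-/

open Finset

theorem smul_sub_sum_Icc_smul_sub_eq {E : Type*} [AddCommGroup E] [Module ℝ E]
    (w : ℕ → ℝ) (ζ : ℕ → E) (n : ℕ) :
    w 0 • ζ n - ∑ k ∈ Icc 1 n, w k • (ζ (n - k + 1) - ζ (n - k))
      = ∑ k ∈ range n, (w k - w (k + 1)) • ζ (n - k) + w n • ζ 0 := by
  have reindex : ∑ k ∈ Icc 1 n, w k • (ζ (n - k + 1) - ζ (n - k))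
      = ∑ k ∈ range n, w (k + 1) • (ζ (n - k) - ζ (n - (k + 1))) := by
    rw [← Ico_add_one_right_eq_Icc, sum_Ico_eq_sum_range]
    refine sum_congr rfl fun k hk => ?_
    rw [add_comm 1 k, show n - (k + 1) + 1 = n - k by have := mem_range.mp hk; omega]
  have shift := sum_range_succ' (fun k => w k • ζ (n - k)) n
  rw [sum_range_succ, Nat.sub_self, Nat.sub_zero] at shift
  rw [reindex]
  simp only [smul_sub, sub_smul, sum_sub_distrib]
  linear_combination (norm := module) -shift

theorem norm_le_norm_zero_of_le_norm_sub_sum_smul {E : Type*} [SeminormedAddCommGroup E]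
    [NormedSpace ℝ E] (w : ℕ → ℝ) (hw0 : w 0 = 1) (hw_nonneg : ∀ k, 0 ≤ w k)
    (hw_anti : Antitone w) (ζ : ℕ → E)
    (hζ : ∀ n, ‖ζ (n + 1)‖ ≤ ‖ζ n - ∑ k ∈ Icc 1 n, w k • (ζ (n - k + 1) - ζ (n - k))‖) (n : ℕ) :
    ‖ζ n‖ ≤ ‖ζ 0‖ := by
  induction n using Nat.strong_induction_on with
  | _ n ih =>
  cases n with
  | zero => rfl
  | succ m =>
  have hcoeff : ∀ k, 0 ≤ w k - w (k + 1) := fun k => sub_nonneg.mpr (hw_anti k.le_succ)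
  calc ‖ζ (m + 1)‖
      ≤ ‖∑ k ∈ range m, (w k - w (k + 1)) • ζ (m - k) + w m • ζ 0‖ := by
        simpa [← smul_sub_sum_Icc_smul_sub_eq, hw0] using hζ m
    _ ≤ ∑ k ∈ range m, (w k - w (k + 1)) * ‖ζ (m - k)‖ + w m * ‖ζ 0‖ := by
        refine (norm_add_le _ _).trans (add_le_add ((norm_sum_le _ _).trans_eq ?_) ?_)
        · exact sum_congr rfl fun k _ => by rw [norm_smul, Real.norm_of_nonneg (hcoeff k)]
        · rw [norm_smul, Real.norm_of_nonneg (hw_nonneg m)]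
    _ ≤ ∑ k ∈ range m, (w k - w (k + 1)) * ‖ζ 0‖ + w m * ‖ζ 0‖ := by
        gcongr with k hk
        · exact hcoeff k
        · exact ih (m - k) (by have := mem_range.mp hk; omega)
    _ = ‖ζ 0‖ := by rw [← sum_mul, sum_range_sub', hw0]; ring

section L1Weights

/-- The weights of the L1 discretisation of the Caputo derivative of order `μ`. -/
noncomputable def l1Weight (μ : ℝ) (k : ℕ) : ℝ := ((k : ℝ) + 1) ^ (1 - μ) - (k : ℝ) ^ (1 - μ)

variable {μ : ℝ}

theorem l1Weight_zero (hμ : μ < 1) : l1Weight μ 0 = 1 := by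
  simp [l1Weight, Real.zero_rpow (sub_ne_zero.mpr hμ.ne')]

theorem l1Weight_nonneg (hμ : μ ≤ 1) (k : ℕ) : 0 ≤ l1Weight μ k :=
  sub_nonneg.mpr (Real.rpow_le_rpow k.cast_nonneg (by linarith) (by linarith))

theorem l1Weight_antitone (hμ0 : 0 ≤ μ) (hμ1 : μ ≤ 1) : Antitone (l1Weight μ) := by
  refine antitone_nat_of_succ_le fun k => ?_
  have hslope := (Real.concaveOn_rpow (by linarith : 0 ≤ 1 - μ) (by linarith)).slope_anti_adjacent
    (Set.mem_Ici.mpr k.cast_nonneg) (Set.mem_Ici.mpr (by positivity : (0 : ℝ) ≤ k + 2))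
    (lt_add_one (k : ℝ)) (by linarith : (k : ℝ) + 1 < k + 2)
  rw [show (k : ℝ) + 2 - (k + 1) = 1 by ring, show (k : ℝ) + 1 - k = 1 by ring, div_one,
    div_one] at hslope
  simpa only [l1Weight, Nat.cast_succ, add_assoc, one_add_one_eq_two] using hslope

end L1Weights

theorem zeta_bound_complex (μ : ℝ) (hμ0 : 0 < μ) (hμ1 : μ < 1)
    (w : ℕ → ℝ) (hw : ∀ k : ℕ, w k = ((k : ℝ) + 1) ^ (1 - μ) - (k : ℝ) ^ (1 - μ))
    (ζ : ℕ → ℂ)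
    (hζ : ∀ n : ℕ, ‖ζ (n + 1)‖ ≤
      ‖ζ n - ∑ k ∈ Finset.Icc 1 n, (w k : ℂ) * (ζ (n - k + 1) - ζ (n - k))‖) :
    ∀ n : ℕ, ‖ζ n‖ ≤ ‖ζ 0‖ := by
  obtain rfl : w = l1Weight μ := funext hw
  simp only [← Complex.real_smul] at hζ
  exact norm_le_norm_zero_of_le_norm_sub_sum_smul _ (l1Weight_zero hμ1) (l1Weight_nonneg hμ1.le)
    (l1Weight_antitone hμ0.le hμ1.le) ζ hζ
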